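/- Let n ∈ ℕ, A, V ∈ ℂ^{n×n} with V invertible, ρ ∈ L¹(ℝ) ∩ L^∞(ℝ) nonnegative, and s ∈ (0,1). Then ∫_ℝ |det(A + rV)|^{-s/n} ρ(r) dr ≤ |det V|^{-s/n} ‖ρ‖_{L¹}^{1-s} ‖ρ‖_∞^{s} · 2^s s^{-s} / (1-s). -/

import Mathlib

/-!
If `z₁, …, zₙ` are the roots of `r ↦ det (A + r V)`, then
`‖det (A + r V)‖ ≥ ‖det V‖ ∏ |r - Re zᵢ|`, so by AM–GM `‖det (A + r V)‖ ^ (-s/n)` is at most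
`‖det V‖ ^ (-s/n)` times the average of the kernels `|r - xᵢ| ^ (-s)`. Each kernel is integrated
against `ρ` by splitting `ℝ` at distance `λ` from its centre: outside, the kernel is at most
`λ ^ (-s)`; inside, `ρ ≤ ‖ρ‖_∞` and `∫_{|t| < λ} |t| ^ (-s) = 2 λ ^ (1 - s) / (1 - s)`.
The choice `λ = s ‖ρ‖₁ / (2 ‖ρ‖_∞)` minimizes the resulting bound.
-/

open MeasureTheory

theorem Matrix.exists_norm_det_add_smul_ge {m : Type*} [Fintype m] [DecidableEq m]
    {V : Matrix m m ℂ} (hV : IsUnit V.det) (A : Matrix m m ℂ) :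
    ∃ x : m → ℝ, ∀ r : ℝ, ‖V.det‖ * ∏ i, |r - x i| ≤ ‖(A + (r : ℂ) • V).det‖ := by
  set p := (-(V⁻¹ * A)).charpoly
  have hsplit : p.Splits := IsAlgClosed.splits p
  let e : p.roots ≃ m := Fintype.equivOfCardEq <| by
    rw [Multiset.card_coe, ← hsplit.natDegree_eq_card_roots, Matrix.charpoly_natDegree_eq_dim]
  refine ⟨fun i => (e.symm i : ℂ).re, fun r => ?_⟩
  have hdet : (A + (r : ℂ) • V).det = V.det * ∏ z : p.roots, ((r : ℂ) - z) := by
    rw [Finset.prod_eq_multiset_prod, Multiset.map_univ (f := ((r : ℂ) - ·)),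
      ← hsplit.eval_eq_prod_roots_of_monic (Matrix.charpoly_monic _), Matrix.eval_charpoly,
      ← Matrix.det_mul, sub_neg_eq_add, Matrix.mul_add, Matrix.mul_nonsing_inv_cancel_left _ _ hV,
      Matrix.scalar_apply, ← Matrix.op_smul_eq_mul_diagonal, op_smul_eq_smul, add_comm]
  rw [hdet, norm_mul, norm_prod, ← e.symm.prod_comp]
  gcongr with i
  simpa using Complex.abs_re_le_norm ((r : ℂ) - e.symm i)

theorem Real.prod_rpow_div_card_le_sum_rpow_div_card {ι : Type*} [Fintype ι] [Nonempty ι]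
    {a : ι → ℝ} (ha : ∀ i, 0 ≤ a i) (p : ℝ) :
    (∏ i, a i) ^ (p / Fintype.card ι) ≤ (∑ i, a i ^ p) / Fintype.card ι := by
  have hn : (0 : ℝ) < Fintype.card ι := by exact_mod_cast Fintype.card_pos
  calc (∏ i, a i) ^ (p / Fintype.card ι) = ∏ i, (a i ^ p) ^ (Fintype.card ι : ℝ)⁻¹ := by
        rw [← Real.finsetProd_rpow _ _ fun i _ => ha i]
        refine Finset.prod_congr rfl fun i _ => ?_
        rw [← Real.rpow_mul (ha i), div_eq_mul_inv]
    _ ≤ ∑ i, (Fintype.card ι : ℝ)⁻¹ * a i ^ p :=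
        Real.geom_mean_le_arith_mean_weighted _ _ _ (fun _ _ => by positivity)
          (by simp [hn.ne']) fun i _ => Real.rpow_nonneg (ha i) _
    _ = (∑ i, a i ^ p) / Fintype.card ι := by rw [← Finset.mul_sum, inv_mul_eq_div]

theorem rpow_neg_le_mul_sum_abs_sub_rpow_of_mul_prod_le {ι : Type*} [Fintype ι] [Nonempty ι]
    {s c d r : ℝ} {x : ι → ℝ} (hs : 0 ≤ s) (hc : 0 < c) (hr : r ∉ Set.range x)
    (hd : c * ∏ i, |r - x i| ≤ d) :
    d ^ (-(s / Fintype.card ι))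
      ≤ c ^ (-(s / Fintype.card ι)) * ((∑ i, |r - x i| ^ (-s)) / Fintype.card ι) := by
  have hP : 0 < ∏ i, |r - x i| :=
    Finset.prod_pos fun i _ => abs_pos.mpr (sub_ne_zero.mpr fun h => hr ⟨i, h.symm⟩)
  calc d ^ (-(s / Fintype.card ι))
      ≤ (c * ∏ i, |r - x i|) ^ (-(s / Fintype.card ι)) :=
        Real.rpow_le_rpow_of_nonpos (mul_pos hc hP) hd (neg_nonpos.mpr (by positivity))
    _ = c ^ (-(s / Fintype.card ι)) * (∏ i, |r - x i|) ^ (-s / Fintype.card ι) := by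
        rw [Real.mul_rpow hc.le hP.le, neg_div]
    _ ≤ c ^ (-(s / Fintype.card ι)) * ((∑ i, |r - x i| ^ (-s)) / Fintype.card ι) := by
        gcongr
        exact Real.prod_rpow_div_card_le_sum_rpow_div_card (fun i => abs_nonneg _) (-s)

section Averaging

variable {s C : ℝ} {ρ : ℝ → ℝ}

theorem locallyIntegrable_abs_rpow_neg (hs : s < 1) :
    LocallyIntegrable (fun t : ℝ => |t| ^ (-s)) :=
  locallyIntegrable_of_norm_le_rpow (C := 1) (α := s) (by simp) (by simpa using hs)
    (ae_of_all _ fun t => by simp [abs_nonneg, Real.abs_rpow_of_nonneg])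
    (continuous_abs.measurable.pow_const _).aestronglyMeasurable

theorem intervalIntegrable_abs_sub_rpow_neg (hs : s < 1) (x a b : ℝ) :
    IntervalIntegrable (fun r => |r - x| ^ (-s)) volume a b := by
  simpa using (((locallyIntegrable_abs_rpow_neg hs).integrableOn_isCompact
    isCompact_uIcc).intervalIntegrable (a := a - x) (b := b - x)).comp_sub_right x

theorem integrableOn_ball_abs_sub_rpow_neg (hs : s < 1) (x l : ℝ) :
    IntegrableOn (fun r => |r - x| ^ (-s)) (Metric.ball x l) := by
  rw [Real.ball_eq_Ioo]
  exact (intervalIntegrable_abs_sub_rpow_neg hs x _ _).1.mono_set Set.Ioo_subset_Ioc_self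

theorem integral_ball_abs_sub_rpow_neg (hs : s < 1) (x : ℝ) {l : ℝ} (hl : 0 ≤ l) :
    ∫ r in Metric.ball x l, |r - x| ^ (-s) = 2 * l ^ (1 - s) / (1 - s) := by
  have hint (a b : ℝ) : IntervalIntegrable (fun t => |t| ^ (-s)) volume a b := by
    simpa using intervalIntegrable_abs_sub_rpow_neg hs 0 a b
  have half : ∫ t in (0 : ℝ)..l, |t| ^ (-s) = l ^ (1 - s) / (1 - s) := by
    rw [intervalIntegral.integral_congr (g := fun t => t ^ (-s)) fun t ht => ?_,
      integral_rpow (Or.inl (by linarith)), Real.zero_rpow (by linarith), neg_add_eq_sub]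
    · ring
    · rw [Set.uIcc_of_le hl] at ht
      simp [abs_of_nonneg ht.1]
  have hsymm : ∫ t in -l..0, |t| ^ (-s) = ∫ t in (0 : ℝ)..l, |t| ^ (-s) := by
    simpa using (intervalIntegral.integral_comp_neg (a := 0) (b := l) fun t => |t| ^ (-s)).symm
  rw [Real.ball_eq_Ioo, ← integral_Ioc_eq_integral_Ioo,
    ← intervalIntegral.integral_of_le (by linarith),
    intervalIntegral.integral_comp_sub_right (fun t => |t| ^ (-s)), sub_sub_cancel_left,
    add_sub_cancel_left,
    ← intervalIntegral.integral_add_adjacent_intervals (hint (-l) 0) (hint 0 l), hsymm, half]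
  ring

theorem abs_sub_rpow_neg_mul_le (hs : 0 ≤ s) {l : ℝ} (hl : 0 < l) {x r a : ℝ}
    (ha : 0 ≤ a) (haC : a ≤ C) :
    |r - x| ^ (-s) * a
      ≤ l ^ (-s) * a + C * (Metric.ball x l).indicator (fun r => |r - x| ^ (-s)) r := by
  by_cases hr : r ∈ Metric.ball x l
  · rw [Set.indicator_of_mem hr, mul_comm C]
    exact le_add_of_nonneg_of_le (mul_nonneg (Real.rpow_nonneg hl.le _) ha)
      (mul_le_mul_of_nonneg_left haC (Real.rpow_nonneg (abs_nonneg _) _))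
  · rw [Set.indicator_of_notMem hr, mul_zero, add_zero]
    rw [Metric.mem_ball, not_lt, Real.dist_eq] at hr
    exact mul_le_mul_of_nonneg_right (Real.rpow_le_rpow_of_nonpos hl hr (by linarith)) ha

theorem integrable_abs_sub_rpow_neg_mul (hs0 : 0 ≤ s) (hs1 : s < 1) (hρ : Integrable ρ) (hρ0 : ∀ r, 0 ≤ ρ r) (hρC : ∀ᵐ r, ρ r ≤ C) (x : ℝ) :
    Integrable fun r => |r - x| ^ (-s) * ρ r := by
  have hind := (integrableOn_ball_abs_sub_rpow_neg hs1 x 1).integrable_indicator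
    measurableSet_ball
  refine ((hρ.const_mul (1 ^ (-s))).add (hind.const_mul C)).mono'
    ((by fun_prop : Measurable fun r => |r - x| ^ (-s)).aestronglyMeasurable.mul hρ.1) ?_
  filter_upwards [hρC] with r hr
  rw [Real.norm_of_nonneg (mul_nonneg (Real.rpow_nonneg (abs_nonneg _) _) (hρ0 r))]
  exact abs_sub_rpow_neg_mul_le hs0 one_pos (hρ0 r) hr

theorem integral_abs_sub_rpow_neg_mul_le (hs0 : 0 ≤ s) (hs1 : s < 1) (hρ : Integrable ρ)
    (hρ0 : ∀ r, 0 ≤ ρ r) (hρC : ∀ᵐ r, ρ r ≤ C) (x : ℝ) {l : ℝ} (hl : 0 < l) :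
    ∫ r, |r - x| ^ (-s) * ρ r ≤ l ^ (-s) * (∫ r, ρ r) + C * (2 * l ^ (1 - s) / (1 - s)) := by
  have hind := (integrableOn_ball_abs_sub_rpow_neg hs1 x l).integrable_indicator
    measurableSet_ball
  calc ∫ r, |r - x| ^ (-s) * ρ r
      ≤ ∫ r, (l ^ (-s) * ρ r + C * (Metric.ball x l).indicator (fun r => |r - x| ^ (-s)) r) :=
        integral_mono_of_nonneg
          (ae_of_all _ fun r => mul_nonneg (Real.rpow_nonneg (abs_nonneg _) _) (hρ0 r))
          ((hρ.const_mul _).add (hind.const_mul C))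
          (hρC.mono fun r hr => abs_sub_rpow_neg_mul_le hs0 hl (hρ0 r) hr)
    _ = l ^ (-s) * (∫ r, ρ r) + C * (2 * l ^ (1 - s) / (1 - s)) := by
        rw [integral_add (hρ.const_mul _) (hind.const_mul C), integral_const_mul,
          integral_const_mul, integral_indicator measurableSet_ball,
          integral_ball_abs_sub_rpow_neg hs1 x hl.le]

theorem Matrix.integral_norm_det_add_smul_rpow_mul_le {m : Type*} [Fintype m] [DecidableEq m]
    [Nonempty m] {V : Matrix m m ℂ} (hV : IsUnit V.det) (A : Matrix m m ℂ) (hs0 : 0 ≤ s)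
    (hs1 : s < 1) (hρ : Integrable ρ) (hρ0 : ∀ r, 0 ≤ ρ r) (hρC : ∀ᵐ r, ρ r ≤ C) {l : ℝ}
    (hl : 0 < l) :
    ∫ r : ℝ, ‖(A + (r : ℂ) • V).det‖ ^ (-(s / Fintype.card m)) * ρ r
      ≤ ‖V.det‖ ^ (-(s / Fintype.card m)) *
        (l ^ (-s) * (∫ r, ρ r) + C * (2 * l ^ (1 - s) / (1 - s))) := by
  obtain ⟨x, hx⟩ := Matrix.exists_norm_det_add_smul_ge hV A
  set n : ℝ := (Fintype.card m : ℝ)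
  set B := l ^ (-s) * (∫ r, ρ r) + C * (2 * l ^ (1 - s) / (1 - s))
  have hn : 0 < n := by positivity
  have hVpos : 0 < ‖V.det‖ := norm_pos_iff.mpr hV.ne_zero
  have hsingle i := integrable_abs_sub_rpow_neg_mul hs0 hs1 hρ hρ0 hρC (x i)
  have hdom : ∀ᵐ r : ℝ, ‖(A + (r : ℂ) • V).det‖ ^ (-(s / n)) * ρ r
      ≤ ‖V.det‖ ^ (-(s / n)) * ((∑ i, |r - x i| ^ (-s) * ρ r) / n) := by
    filter_upwards [measure_eq_zero_iff_ae_notMem.mp ((Set.finite_range x).measure_zero volume)]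
      with r hr
    rw [← Finset.sum_mul, ← div_mul_eq_mul_div, ← mul_assoc]
    exact mul_le_mul_of_nonneg_right
      (rpow_neg_le_mul_sum_abs_sub_rpow_of_mul_prod_le hs0 hVpos hr (hx r)) (hρ0 r)
  calc ∫ r : ℝ, ‖(A + (r : ℂ) • V).det‖ ^ (-(s / n)) * ρ r
      ≤ ∫ r, ‖V.det‖ ^ (-(s / n)) * ((∑ i, |r - x i| ^ (-s) * ρ r) / n) :=
        integral_mono_of_nonneg
          (ae_of_all _ fun r => mul_nonneg (Real.rpow_nonneg (norm_nonneg _) _) (hρ0 r))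
          (((integrable_finsetSum _ fun i _ => hsingle i).div_const _).const_mul _) hdom
    _ = ‖V.det‖ ^ (-(s / n)) * ((∑ i, ∫ r, |r - x i| ^ (-s) * ρ r) / n) := by
        rw [integral_const_mul, integral_div, integral_finsetSum _ fun i _ => hsingle i]
    _ ≤ ‖V.det‖ ^ (-(s / n)) * ((∑ _i : m, B) / n) := by
        gcongr with i
        exact integral_abs_sub_rpow_neg_mul_le hs0 hs1 hρ hρ0 hρC (x i) hl
    _ = ‖V.det‖ ^ (-(s / n)) * B := by
        rw [Finset.sum_const, Finset.card_univ, nsmul_eq_mul, mul_div_cancel_left₀ _ hn.ne']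

end Averaging

theorem rpow_neg_mul_add_mul_rpow_one_sub_at_minimizer {s I C : ℝ} (hs0 : 0 < s) (hs1 : s < 1)
    (hI : 0 < I) (hC : 0 < C) :
    (s * I / (2 * C)) ^ (-s) * I + C * (2 * (s * I / (2 * C)) ^ (1 - s) / (1 - s))
      = I ^ (1 - s) * C ^ s * (2 ^ s * s ^ (-s) / (1 - s)) := by
  set l := s * I / (2 * C)
  have hl : 0 < l := by positivity
  have hl1 : l ^ (1 - s) = l ^ (-s) * l := by
    rw [sub_eq_neg_add, Real.rpow_add_one hl.ne']
  have hI1 : I ^ (1 - s) = I ^ (-s) * I := by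
    rw [sub_eq_neg_add, Real.rpow_add_one hI.ne']
  have hls : l ^ (-s) = 2 ^ s * C ^ s * s ^ (-s) * I ^ (-s) := by
    rw [Real.div_rpow (by positivity) (by positivity), Real.mul_rpow hs0.le hI.le,
      Real.mul_rpow zero_le_two hC.le, Real.rpow_neg zero_le_two, Real.rpow_neg hC.le]
    field_simp
  have h1s : 1 - s ≠ 0 := by linarith
  rw [hl1, hI1, hls]
  simp only [l]
  field_simp
  ring

theorem determinant_averaging_bound_optimized_general
    (n : ℕ) (hn : 0 < n) (A V : Matrix (Fin n) (Fin n) ℂ) (hV : IsUnit V.det)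
    (ρ : ℝ → ℝ) (hρint : Integrable ρ)
    (hρnonneg : ∀ r, 0 ≤ ρ r) (Cinf : ℝ)
    (hCinf : ∀ᵐ r ∂(volume : Measure ℝ), ρ r ≤ Cinf)
    (s : ℝ) (hs : s ∈ Set.Ioo (0:ℝ) 1) :
    ∫ r : ℝ, ‖(A + (r : ℂ) • V).det‖ ^ (-(s / (n : ℝ))) * ρ r
      ≤ ‖V.det‖ ^ (-(s / (n : ℝ))) *
        ((∫ r : ℝ, ρ r) ^ (1 - s) * Cinf ^ s * (2 ^ s * s ^ (-s) / (1 - s))) := by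
  obtain ⟨hs0, hs1⟩ := hs
  have hC0 : 0 ≤ Cinf := by
    obtain ⟨r, hr⟩ := hCinf.exists
    exact (hρnonneg r).trans hr
  have hI0 : 0 ≤ ∫ r, ρ r := integral_nonneg hρnonneg
  by_cases hρ0 : ρ =ᵐ[volume] 0
  · rw [integral_eq_zero_of_ae (hρ0.mono fun r hr => by simp [hr])]
    have : 0 < 1 - s := by linarith
    positivity
  have hI : 0 < ∫ r, ρ r := hI0.lt_of_ne fun h =>
    hρ0 ((integral_eq_zero_iff_of_nonneg hρnonneg hρint).mp h.symm)
  have hC : 0 < Cinf := hC0.lt_of_ne fun h =>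
    hρ0 (hCinf.mono fun r hr => le_antisymm (hr.trans h.ge) (hρnonneg r))
  have : Nonempty (Fin n) := ⟨⟨0, hn⟩⟩
  simpa [rpow_neg_mul_add_mul_rpow_one_sub_at_minimizer hs0 hs1 hI hC] using
    Matrix.integral_norm_det_add_smul_rpow_mul_le hV A hs0.le hs1 hρint hρnonneg hCinf
      (l := s * (∫ r, ρ r) / (2 * Cinf)) (by positivity)

theorem determinant_averaging_bound_optimized
    (n : ℕ) (hn : 0 < n) (A V : Matrix (Fin n) (Fin n) ℂ) (hV : IsUnit V.det)
    (ρ : ℝ → ℝ) (hρmeas : Measurable ρ) (hρint : Integrable ρ)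
    (hρnonneg : ∀ r, 0 ≤ ρ r) (Cinf : ℝ)
    (hCinf : ∀ᵐ r ∂(volume : Measure ℝ), ρ r ≤ Cinf)
    (s : ℝ) (hs : s ∈ Set.Ioo (0:ℝ) 1) :
    ∫ r : ℝ, ‖(A + (r : ℂ) • V).det‖ ^ (-(s / (n : ℝ))) * ρ r
      ≤ ‖V.det‖ ^ (-(s / (n : ℝ))) *
        ((∫ r : ℝ, ρ r) ^ (1 - s) * Cinf ^ s * (2 ^ s * s ^ (-s) / (1 - s))) :=
  determinant_averaging_bound_optimized_general n hn A V hV ρ hρint hρnonneg Cinf hCinf s hs
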